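/- Let C be an abelian category and V a resolving subcategory of C satisfying the syzygy hypothesis. If f : M → N is an epimorphism in C where both M and N have finite V-dimension, then ker f has finite V-dimension. -/

import Mathlib

/-!
Write `𝔉` for the class of objects of finite `V`-dimension. The syzygy hypothesis enters only
once: if `p : P ⟶ X` is an epimorphism with `P ∈ V` and `X ∈ 𝔉`, splicing `p` with an arbitrary
`V`-resolution of `ker p` gives a `V`-resolution of `X`; its syzygies, which are those of
`ker p`, eventually lie in `V`, so `ker p ∈ 𝔉`.

For an epimorphism `B ⟶ D` with kernel in `𝔉`, `D ∈ 𝔉` implies `B ∈ 𝔉` by induction on the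
`V`-dimension of `D`. Pulling back along a `V`-presentation `P ⟶ D` whose kernel has dimension
`n` reduces the step to: an epimorphism out of an object of `𝔉` whose kernel has dimension `n`
has its target in `𝔉`. That in turn follows from the case `n`, applied to the epimorphism
`ker (p ≫ g) ⟶ ker g` induced by a `V`-presentation `p` of the source of `g`, whose kernel is
`ker p`. The same device proves the theorem: for `f : M ⟶ N` and a `V`-presentation
`ε : L ⟶ M`, the induced epimorphism `ker (ε ≫ f) ⟶ ker f` has kernel `ker ε`, and both
`ker ε` and `ker (ε ≫ f)` lie in `𝔉`.
-/

open CategoryTheory CategoryTheory.Limits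

variable {C : Type*} [Category C] [Abelian C]

/-- `V` is a resolving subcategory of the abelian category `C`: it is an
isomorphism-closed full subcategory (encoded as a predicate on objects) that is closed
under finite direct sums (including the empty one, i.e. it contains the zero objects),
direct summands and extensions, such that the kernel of every epimorphism between
objects of `V` lies in `V`, and such that every object of `C` admits an epimorphism
from an object of `V`. -/
structure IsResolving (V : C → Prop) : Prop where
  iso_closed : ∀ {X Y : C}, (X ≅ Y) → V X → V Y
  zero_mem : ∀ X : C, IsZero X → V X
  sum_closed : ∀ X Y : C, V X → V Y → V (X ⊞ Y)
  summand_closed : ∀ (X Y : C) (i : Y ⟶ X) (r : X ⟶ Y), i ≫ r = 𝟙 Y → V X → V Y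
  ext_closed : ∀ S : ShortComplex C, S.ShortExact → V S.X₁ → V S.X₃ → V S.X₂
  ker_of_epi_mem : ∀ S : ShortComplex C, S.ShortExact → V S.X₂ → V S.X₃ → V S.X₁
  epi_from : ∀ X : C, ∃ (P : C) (p : P ⟶ X), V P ∧ Epi p

/-- `(L, ε)` is a `V`-resolution of `M`: an exact sequence
`⋯ → L₁ → L₀ → M → 0` with all `Lᵢ` in `V`. -/
structure IsVResolution (V : C → Prop) (M : C) (L : ChainComplex C ℕ)
    (ε : L.X 0 ⟶ M) : Prop where
  mem : ∀ n : ℕ, V (L.X n)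
  epi : Epi ε
  comp_zero : L.d 1 0 ≫ ε = 0
  exact_zero : (ShortComplex.mk (L.d 1 0) ε comp_zero).Exact
  exact : ∀ n : ℕ, L.ExactAt (n + 1)

/-- `M` has finite `V`-dimension: it admits a `V`-resolution with `Lᵢ = 0`
for all large `i`. -/
def HasFiniteVDim (V : C → Prop) (M : C) : Prop :=
  ∃ (L : ChainComplex C ℕ) (ε : L.X 0 ⟶ M),
    IsVResolution V M L ε ∧ ∃ N : ℕ, ∀ n : ℕ, N < n → IsZero (L.X n)

/-- The syzygy hypothesis: for every object `F` of finite `V`-dimension and every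
`V`-resolution `E` of `F`, the cycles `ker (Eₙ₊₁ → Eₙ)` lie in `V` for all
sufficiently large `n`. -/
def SyzygyHyp (V : C → Prop) : Prop :=
  ∀ (F : C) (E : ChainComplex C ℕ) (ε : E.X 0 ⟶ F),
    HasFiniteVDim V F → IsVResolution V F E ε →
      ∃ N : ℕ, ∀ n : ℕ, N ≤ n → V (kernel (E.d (n + 1) n))

namespace CategoryTheory

lemma ShortComplex.exact_of_f_eq_comp_kernel_ι {S : ShortComplex C} (a : S.X₁ ⟶ kernel S.g)
    (ha : Epi a) (h : S.f = a ≫ kernel.ι S.g) : S.Exact := by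
  rw [S.exact_iff_epi_kernel_lift]
  convert ha
  ext
  simp [h]

lemma ShortComplex.Exact.comp_mono {S : ShortComplex C} (hS : S.Exact) {W : C} (m : S.X₃ ⟶ W)
    [Mono m] : (ShortComplex.mk S.f (S.g ≫ m) (by simp)).Exact := by
  let φ : S ⟶ ShortComplex.mk S.f (S.g ≫ m) (by simp) := { τ₁ := 𝟙 _, τ₂ := 𝟙 _, τ₃ := m }
  have : Mono φ.τ₃ := ‹Mono m›
  exact (ShortComplex.exact_iff_of_epi_of_isIso_of_mono φ).1 hS

lemma Limits.kernel.isPullback_ι_comp {L M N : C} (ε : L ⟶ M) (f : M ⟶ N) :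
    IsPullback (kernel.ι (ε ≫ f)) (kernel.map (ε ≫ f) f ε (𝟙 N) (by simp)) ε (kernel.ι f) := by
  refine ⟨⟨by simp⟩, ⟨PullbackCone.IsLimit.mk _ (fun s => kernel.lift _ s.fst ?_) ?_ ?_ ?_⟩⟩
  · rw [← Category.assoc, s.condition, Category.assoc, kernel.condition, comp_zero]
  · intro s
    simp
  · intro s
    ext
    simp [s.condition]
  · intro s m h₁ _
    ext
    simpa using h₁

namespace IsPullback

variable {P X Y Z : C} {fst : P ⟶ X} {snd : P ⟶ Y} {f : X ⟶ Z} {g : Y ⟶ Z}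

lemma epi_snd (h : IsPullback fst snd f g) [Epi f] : Epi snd :=
  MorphismProperty.IsStableUnderBaseChange.of_isPullback (P := MorphismProperty.epimorphisms C) h
    (MorphismProperty.epimorphisms.infer_property f)

noncomputable def kernelSndIso (h : IsPullback fst snd f g) : kernel snd ≅ kernel f :=
  have := isIso_kernel_map_of_isPullback h.flip
  asIso (kernel.map _ _ _ _ h.w.symm)

end IsPullback

lemma Limits.kernel.exists_epi_kernel_iso {L M N : C} (ε : L ⟶ M) [Epi ε] (f : M ⟶ N) :
    ∃ g : kernel (ε ≫ f) ⟶ kernel f, Epi g ∧ Nonempty (kernel g ≅ kernel ε) :=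
  have sq := kernel.isPullback_ι_comp ε f
  ⟨_, sq.epi_snd, ⟨sq.kernelSndIso⟩⟩

end CategoryTheory

def HasVDimLE (V : C → Prop) : ℕ → C → Prop
  | 0, X => V X
  | n + 1, X => ∃ (P : C) (p : P ⟶ X), V P ∧ Epi p ∧ HasVDimLE V n (kernel p)

variable {V : C → Prop}

section Resolutions

lemma HasVDimLE.of_iso (hV : IsResolving V) :
    ∀ {n : ℕ} {X Y : C}, (X ≅ Y) → HasVDimLE V n X → HasVDimLE V n Y
  | 0, _, _, e, h => hV.iso_closed e h
  | _ + 1, _, _, e, ⟨P, p, hP, _, hk⟩ =>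
    ⟨P, p ≫ e.hom, hP, epi_comp _ _, HasVDimLE.of_iso hV (kernelCompMono p e.hom).symm hk⟩

lemma HasVDimLE.kernel_g_of_exact (hV : IsResolving V) {S : ShortComplex C} (hS : S.Exact)
    (hX₁ : V S.X₁) {n : ℕ} (h : HasVDimLE V n (kernel S.f)) : HasVDimLE V (n + 1) (kernel S.g) :=
  ⟨S.X₁, kernel.lift S.g S.f S.zero, hX₁, hS.epi_kernelLift,
    h.of_iso hV ((kernelIsoOfEq (kernel.lift_ι _ _ _)).symm ≪≫ kernelCompMono _ _)⟩

lemma exists_isVResolution (hV : IsResolving V) (X : C) :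
    ∃ (L : ChainComplex C ℕ) (ε : L.X 0 ⟶ X), IsVResolution V X L ε := by
  choose P π hP hπ using hV.epi_from
  let next {X₀ X₁ : C} (f : X₁ ⟶ X₀) : Σ' (X₂ : C) (d : X₂ ⟶ X₁), d ≫ f = 0 :=
    ⟨P (kernel f), π _ ≫ kernel.ι f, by simp⟩
  let L := ChainComplex.mk' (P X) (P (kernel (π X))) (π _ ≫ kernel.ι (π X)) next
  refine ⟨L, π X, ⟨?_, hπ X, ?_, ?_, fun n => ?_⟩⟩
  · rintro (_ | _ | n)
    · exact hP _
    · exact hP _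
    · exact hV.iso_closed (ChainComplex.mk'XIso _ _ _ _ n).symm (hP _)
  · simp [L]
    rfl
  · exact ShortComplex.exact_of_f_eq_comp_kernel_ι (π _) (hπ _) (by simp [L])
  · rw [HomologicalComplex.exactAt_iff' _ (n + 2) (n + 1) n (by simp) (by simp)]
    exact ShortComplex.exact_of_f_eq_comp_kernel_ι ((ChainComplex.mk'XIso _ _ _ next n).hom ≫ π _)
      (epi_comp' (inferInstanceAs (Epi (ChainComplex.mk'XIso _ _ _ next n).hom)) (hπ _))
      ((ChainComplex.mk'_d _ _ _ next n).trans (Category.assoc _ _ _).symm)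

variable {X : C} {L : ChainComplex C ℕ}

lemma IsVResolution.exact_succ {ε : L.X 0 ⟶ X} (hres : IsVResolution V X L ε) (k : ℕ) :
    (L.sc' (k + 2) (k + 1) k).Exact :=
  (L.exactAt_iff' (k + 2) (k + 1) k (by simp) (by simp)).1 (hres.exact k)

lemma IsVResolution.hasVDimLE (hV : IsResolving V) {ε : L.X 0 ⟶ X}
    (hres : IsVResolution V X L ε) {n : ℕ} (h : V (kernel (L.d (n + 1) n))) :
    HasVDimLE V (n + 2) X := by
  have down : ∀ k j, HasVDimLE V j (kernel (L.d (k + 1) k)) →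
      HasVDimLE V (j + k) (kernel (L.d 1 0)) := by
    intro k
    induction k with
    | zero => exact fun j h => h
    | succ k ih =>
      intro j h
      rw [← Nat.succ_add_eq_add_succ]
      exact ih (j + 1) (HasVDimLE.kernel_g_of_exact hV (hres.exact_succ k) (hres.mem _) h)
  refine ⟨L.X 0, ε, hres.mem 0, hres.epi, ?_⟩
  exact HasVDimLE.kernel_g_of_exact hV hres.exact_zero (hres.mem 1) (by simpa using down n 0 h)

lemma isVResolution_single₀ (hV : IsResolving V) (hX : V X) :
    IsVResolution V X ((ChainComplex.single₀ C).obj X) (𝟙 X) := by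
  have hX₁ := HomologicalComplex.isZero_single_obj_X (ComplexShape.down ℕ) 0 X 1 (by simp)
  refine ⟨?_, inferInstanceAs (Epi (𝟙 X)), hX₁.eq_of_src _ _,
    (ShortComplex.exact_iff_mono _ (hX₁.eq_of_src _ _)).2 (inferInstanceAs (Mono (𝟙 X))),
    ChainComplex.exactAt_succ_single_obj X⟩
  rintro (_ | n)
  · exact hX
  · exact hV.zero_mem _ (HomologicalComplex.isZero_single_obj_X _ _ _ _ (by simp))

lemma IsVResolution.augment {P : C} {p : P ⟶ X} [Epi p] (hP : V P) {ε : L.X 0 ⟶ kernel p}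
    (hres : IsVResolution V (kernel p) L ε) :
    IsVResolution V X
      (L.augment (ε ≫ kernel.ι p) (by rw [← Category.assoc, hres.comp_zero, zero_comp])) p where
  mem
    | 0 => hP
    | n + 1 => hres.mem n
  epi := ‹_›
  comp_zero := by
    simp
    rfl
  exact_zero := ShortComplex.exact_of_f_eq_comp_kernel_ι ε hres.epi rfl
  exact
    | 0 => by
      rw [HomologicalComplex.exactAt_iff' _ 2 1 0 (by simp) (by simp)]
      exact hres.exact_zero.comp_mono (kernel.ι p)
    | n + 1 => by
      rw [HomologicalComplex.exactAt_iff' _ (n + 3) (n + 2) (n + 1) (by simp) (by simp)]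
      exact hres.exact_succ n

end Resolutions

lemma hasFiniteVDim_of_mem (hV : IsResolving V) {X : C} (hX : V X) : HasFiniteVDim V X :=
  ⟨_, _, isVResolution_single₀ hV hX, 0, fun n hn =>
    HomologicalComplex.isZero_single_obj_X (ComplexShape.down ℕ) 0 X n (by omega)⟩

lemma hasFiniteVDim_tgt_of_mem_src {X P : C} (p : P ⟶ X) [Epi p] (hP : V P)
    (hker : HasFiniteVDim V (kernel p)) : HasFiniteVDim V X := by
  obtain ⟨L, ε, hres, N, hN⟩ := hker
  refine ⟨L.augment (ε ≫ kernel.ι p) _, p, hres.augment hP, N + 1, fun n hn => ?_⟩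
  rcases n with _ | n
  · omega
  · exact hN n (by omega)

lemma HasVDimLE.hasFiniteVDim (hV : IsResolving V) :
    ∀ {n : ℕ} {X : C}, HasVDimLE V n X → HasFiniteVDim V X
  | 0, _, hX => hasFiniteVDim_of_mem hV hX
  | _ + 1, _, ⟨_, p, hP, _, hk⟩ => hasFiniteVDim_tgt_of_mem_src p hP (hk.hasFiniteVDim hV)

lemma HasFiniteVDim.exists_hasVDimLE (hV : IsResolving V) {X : C} (h : HasFiniteVDim V X) :
    ∃ n, HasVDimLE V n X := by
  obtain ⟨L, ε, hres, N, hN⟩ := h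
  exact ⟨N + 2, hres.hasVDimLE hV (hV.zero_mem _ ((hN (N + 1) (by omega)).of_mono (kernel.ι _)))⟩

lemma HasFiniteVDim.of_iso (hV : IsResolving V) {X Y : C} (e : X ≅ Y) (h : HasFiniteVDim V X) :
    HasFiniteVDim V Y :=
  have ⟨_, hn⟩ := h.exists_hasVDimLE hV
  (hn.of_iso hV e).hasFiniteVDim hV

lemma hasFiniteVDim_kernel_of_mem_src (hV : IsResolving V) (hSyz : SyzygyHyp V) {P X : C}
    (p : P ⟶ X) [Epi p] (hP : V P) (hX : HasFiniteVDim V X) : HasFiniteVDim V (kernel p) := by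
  obtain ⟨L, ε, hres⟩ := exists_isVResolution hV (kernel p)
  obtain ⟨N, hN⟩ := hSyz X (L.augment (ε ≫ kernel.ι p) _) p hX (hres.augment hP)
  exact (hres.hasVDimLE hV (hN (N + 1) (by omega))).hasFiniteVDim hV

lemma hasFiniteVDim_src_of_mem_tgt (hV : IsResolving V) (hSyz : SyzygyHyp V) {B D : C}
    (h : B ⟶ D) [Epi h] (hD : V D) (hker : HasFiniteVDim V (kernel h)) : HasFiniteVDim V B := by
  obtain ⟨U, u, hU, _⟩ := hV.epi_from B
  have hW : V (kernel (u ≫ h)) :=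
    hV.ker_of_epi_mem _ { exact := ShortComplex.exact_kernel (u ≫ h) } hU hD
  obtain ⟨g, _, ⟨e⟩⟩ := kernel.exists_epi_kernel_iso u h
  have hkerg := hasFiniteVDim_kernel_of_mem_src hV hSyz g hW hker
  exact hasFiniteVDim_tgt_of_mem_src u hU (hkerg.of_iso hV e)

lemma hasFiniteVDim_tgt_of_hasVDimLE_kernel (hV : IsResolving V) (hSyz : SyzygyHyp V) {n : ℕ}
    (hExt : ∀ {B D : C} (h : B ⟶ D) [Epi h],
      HasFiniteVDim V (kernel h) → HasVDimLE V n D → HasFiniteVDim V B)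
    {B D : C} (g : B ⟶ D) [Epi g] (hker : HasVDimLE V n (kernel g)) (hB : HasFiniteVDim V B) :
    HasFiniteVDim V D := by
  obtain ⟨P, p, hP, _⟩ := hV.epi_from B
  obtain ⟨g', _, ⟨e⟩⟩ := kernel.exists_epi_kernel_iso p g
  have hkerg' := (hasFiniteVDim_kernel_of_mem_src hV hSyz p hP hB).of_iso hV e.symm
  exact hasFiniteVDim_tgt_of_mem_src (p ≫ g) hP (hExt g' hkerg' hker)

lemma hasFiniteVDim_src_of_hasVDimLE_tgt (hV : IsResolving V) (hSyz : SyzygyHyp V) :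
    ∀ (n : ℕ) {B D : C} (h : B ⟶ D) [Epi h],
      HasFiniteVDim V (kernel h) → HasVDimLE V n D → HasFiniteVDim V B
  | 0, _, _, h, _, hker, hD => hasFiniteVDim_src_of_mem_tgt hV hSyz h hD hker
  | n + 1, _, _, h, _, hker, ⟨P, e, hP, _, he⟩ => by
    have sq := IsPullback.of_hasPullback h e
    have hpb : HasFiniteVDim V (pullback h e) :=
      hasFiniteVDim_src_of_mem_tgt hV hSyz (pullback.snd h e) hP
        (hker.of_iso hV sq.kernelSndIso.symm)
    exact hasFiniteVDim_tgt_of_hasVDimLE_kernel hV hSyz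
      (hasFiniteVDim_src_of_hasVDimLE_tgt hV hSyz n) (pullback.fst h e)
      (he.of_iso hV sq.flip.kernelSndIso.symm) hpb

lemma hasFiniteVDim_tgt_of_src_of_kernel (hV : IsResolving V) (hSyz : SyzygyHyp V) {B D : C}
    (g : B ⟶ D) [Epi g] (hker : HasFiniteVDim V (kernel g)) (hB : HasFiniteVDim V B) :
    HasFiniteVDim V D :=
  have ⟨n, hn⟩ := hker.exists_hasVDimLE hV
  hasFiniteVDim_tgt_of_hasVDimLE_kernel hV hSyz
    (hasFiniteVDim_src_of_hasVDimLE_tgt hV hSyz n) g hn hB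

/-- Let `C` be an abelian category and `V` a resolving subcategory of
`C` satisfying the syzygy hypothesis.  If `f : M ⟶ N` is an epimorphism in `C` where
both `M` and `N` have finite `V`-dimension, then `ker f` has finite
`V`-dimension. -/
theorem stmt_10 {C : Type*} [Category C] [Abelian C]
    (V : C → Prop) (hV : IsResolving V) (hSyz : SyzygyHyp V)
    {M N : C} (f : M ⟶ N) (hf : Epi f)
    (hM : HasFiniteVDim V M) (hN : HasFiniteVDim V N) :
    HasFiniteVDim V (kernel f) := by
  obtain ⟨L, ε, hL, _⟩ := hV.epi_from M
  obtain ⟨g, _, ⟨e⟩⟩ := kernel.exists_epi_kernel_iso ε f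
  have hkerg := (hasFiniteVDim_kernel_of_mem_src hV hSyz ε hL hM).of_iso hV e.symm
  have hkerεf := hasFiniteVDim_kernel_of_mem_src hV hSyz (ε ≫ f) hL hN
  exact hasFiniteVDim_tgt_of_src_of_kernel hV hSyz g hkerg hkerεf
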